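/- arXiv:2504.09400 — 2 statements merged into one kernel-verified Lean document; each statement's English description precedes it below -/
import Mathlib

section
/- Let A₁₀ = ℚ[g₄,g₆,h₆,k₆]/(g₆² + 2h₆² + k₆², 4g₄³ + 27h₆² + k₆²) and let σ be the ℚ-algebra involution of A₁₀ determined by σ(g₄) = g₄, σ(g₆) = −g₆, σ(h₆) = h₆, σ(k₆) = −k₆. Then the ℚ-algebra homomorphism ℚ[x,y,z] → A₁₀ given by x ↦ g₄, y ↦ h₆, z ↦ g₆k₆ sends z² + 16x⁶ + 208x³y² + 675y⁴ to 0 and induces a ℚ-algebra isomorphism ℚ[x,y,z]/(z² + 16x⁶ + 208x³y² + 675y⁴) ≅ A₁₀^σ, where A₁₀^σ is the subalgebra of σ-fixed elements of A₁₀. -/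
open MvPolynomial

/-- The canonical ring `A₁₀ = ℚ[g₄,g₆,h₆,k₆]/(g₆² + 2h₆² + k₆², 4g₄³ + 27h₆² + k₆²)` of
the Shimura curve of discriminant 10; the variables `X 0, X 1, X 2, X 3` play the roles
of `g₄, g₆, h₆, k₆`. -/
noncomputable abbrev A10 : Type :=
  MvPolynomial (Fin 4) ℚ ⧸
    Ideal.span {(X 1 : MvPolynomial (Fin 4) ℚ) ^ 2 + 2 * X 2 ^ 2 + X 3 ^ 2,
      4 * (X 0 : MvPolynomial (Fin 4) ℚ) ^ 3 + 27 * X 2 ^ 2 + X 3 ^ 2}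

/-- The class of `g₄` in `A₁₀`. -/
noncomputable def g4 : A10 := Ideal.Quotient.mk _ (X 0)

/-- The class of `g₆` in `A₁₀`. -/
noncomputable def g6 : A10 := Ideal.Quotient.mk _ (X 1)

/-- The class of `h₆` in `A₁₀`. -/
noncomputable def h6 : A10 := Ideal.Quotient.mk _ (X 2)

/-- The class of `k₆` in `A₁₀`. -/
noncomputable def k6 : A10 := Ideal.Quotient.mk _ (X 3)

/-!
Modulo the relations, `g₆² = 4g₄³ + 25h₆²` and `k₆² = -(4g₄³ + 27h₆²)`, so `A₁₀` is spanned by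
`1, g₆, k₆` over the image `S` of `x ↦ g₄, y ↦ h₆, z ↦ g₆k₆`. Since `σ` fixes `S` and negates
`g₆` and `k₆`, and `2` is invertible, `A₁₀^σ = S`.

For the kernel, send `A₁₀` to `ℚ[x,y][√c][√d]` with `c = 4x³ + 25y²`, `d = -(4x³ + 27y²)`.
There `1` and `√c√d` are independent over `ℚ[x,y]` (a tower of two free quadratic extensions)
and `(√c√d)² = cd = -(16x⁶ + 208x³y² + 675y⁴)`, so by division by the monic `z² - cd` the
kernel of `z ↦ √c√d` on `ℚ[x,y][z]` is generated by `z² - cd`.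
-/

namespace MvPolynomial

variable (R : Type*) [CommSemiring R] (n : ℕ)

noncomputable def finSuccEquivLast :
    MvPolynomial (Fin (n + 1)) R ≃ₐ[R] Polynomial (MvPolynomial (Fin n) R) :=
  (renameEquiv R _root_.finSuccEquivLast).trans (optionEquivLeft R (Fin n))

@[simp]
theorem finSuccEquivLast_X_last : finSuccEquivLast R n (X (Fin.last n)) = Polynomial.X := by
  simp [finSuccEquivLast, optionEquivLeft_X_none]

@[simp]
theorem finSuccEquivLast_X_castSucc (i : Fin n) :
    finSuccEquivLast R n (X i.castSucc) = Polynomial.C (X i) := by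
  simp [finSuccEquivLast, optionEquivLeft_X_some]

end MvPolynomial

theorem LinearIndependent.one_algebraMap_mul {R K L : Type*} [CommRing R] [CommRing K]
    [CommRing L] [Algebra R K] [Algebra K L] [Algebra R L] [IsScalarTower R K L] {u : K} {v : L}
    (hu : LinearIndependent R ![1, u]) (hv : LinearIndependent K ![1, v]) :
    LinearIndependent R ![1, algebraMap K L u * v] := by
  rw [LinearIndependent.pair_iff] at hu hv ⊢
  intro s t hst
  obtain ⟨hs, htu⟩ := hv (algebraMap R K s) (t • u) <| by
    simpa [Algebra.smul_def, IsScalarTower.algebraMap_apply R K L, mul_assoc] using hst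
  exact ⟨(hu s 0 (by simpa [Algebra.smul_def] using hs)).1, (hu 0 t (by simpa using htu)).2⟩

namespace Polynomial

theorem ker_aeval_eq_span_X_sq_sub_C {R S : Type*} [CommRing R] [Nontrivial R]
    [CommRing S] [Algebra R S] {c : R} {α : S} (hα : α ^ 2 = algebraMap R S c)
    (hind : LinearIndependent R ![1, α]) :
    RingHom.ker (aeval α) = Ideal.span {X ^ 2 - C c} := by
  have hq : (X ^ 2 - C c : R[X]).Monic := monic_X_pow_sub_C c two_ne_zero
  ext p
  rw [RingHom.mem_ker, Ideal.mem_span_singleton, ← modByMonic_eq_zero_iff_dvd hq]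
  have hp : aeval α p = aeval α (p %ₘ (X ^ 2 - C c)) := by
    conv_lhs => rw [← modByMonic_add_div p (X ^ 2 - C c)]
    simp [hα]
  have hr : (p %ₘ (X ^ 2 - C c)).natDegree ≤ 1 := by
    have := natDegree_modByMonic_lt p hq (ne_of_apply_ne natDegree (by simp))
    rw [natDegree_X_pow_sub_C] at this
    omega
  have hlin := eq_X_add_C_of_natDegree_le_one hr
  rw [hp]
  refine ⟨fun h ↦ ?_, fun h ↦ by simp [h]⟩
  rw [hlin] at h
  obtain ⟨h0, h1⟩ := LinearIndependent.pair_iff.mp hind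
    ((p %ₘ (X ^ 2 - C c)).coeff 0) ((p %ₘ (X ^ 2 - C c)).coeff 1)
    (by simpa [Algebra.smul_def, add_comm] using h)
  rw [hlin, h0, h1]
  simp

end Polynomial

namespace AdjoinRoot

variable {R : Type*} [CommRing R]

theorem linearIndependent_one_root {p : Polynomial R} (hp : p.Monic) (hdeg : 1 < p.natDegree) :
    LinearIndependent R ![1, root p] := by
  have h := (powerBasis' hp).basis.linearIndependent.comp
    (Fin.castLE hdeg) (Fin.castLE_injective hdeg)
  convert h using 1
  ext i
  fin_cases i <;> simp [Fin.castLE]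

theorem root_X_sq_sub_C_sq (c : R) :
    root (Polynomial.X ^ 2 - Polynomial.C c) ^ 2 = algebraMap R _ c := by
  have h := eval₂_root (Polynomial.X ^ 2 - Polynomial.C c)
  rwa [Polynomial.eval₂_sub, Polynomial.eval₂_X_pow, Polynomial.eval₂_C, sub_eq_zero] at h

theorem linearIndependent_one_root_X_sq_sub_C [Nontrivial R] (c : R) :
    LinearIndependent R ![1, root (Polynomial.X ^ 2 - Polynomial.C c)] :=
  linearIndependent_one_root (Polynomial.monic_X_pow_sub_C c two_ne_zero)
    (by rw [Polynomial.natDegree_X_pow_sub_C]; norm_num)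

end AdjoinRoot

theorem k6_sq : k6 ^ 2 = -(4 * g4 ^ 3 + 27 * h6 ^ 2) := by
  have h : (Ideal.Quotient.mk _ (4 * X 0 ^ 3 + 27 * X 2 ^ 2 + X 3 ^ 2) : A10) = 0 :=
    Ideal.Quotient.eq_zero_iff_mem.mpr (Ideal.subset_span (by simp))
  simp only [map_add, map_mul, map_pow, map_ofNat] at h
  change 4 * g4 ^ 3 + 27 * h6 ^ 2 + k6 ^ 2 = 0 at h
  linear_combination h

theorem g6_sq : g6 ^ 2 = 4 * g4 ^ 3 + 25 * h6 ^ 2 := by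
  have h : (Ideal.Quotient.mk _ (X 1 ^ 2 + 2 * X 2 ^ 2 + X 3 ^ 2) : A10) = 0 :=
    Ideal.Quotient.eq_zero_iff_mem.mpr (Ideal.subset_span (by simp))
  simp only [map_add, map_mul, map_pow, map_ofNat] at h
  change g6 ^ 2 + 2 * h6 ^ 2 + k6 ^ 2 = 0 at h
  linear_combination h - k6_sq

noncomputable def invariantsMap : MvPolynomial (Fin 3) ℚ →ₐ[ℚ] A10 := aeval ![g4, h6, g6 * k6]

noncomputable def invariantsRel : MvPolynomial (Fin 3) ℚ :=
  X 2 ^ 2 + 16 * X 0 ^ 6 + 208 * X 0 ^ 3 * X 1 ^ 2 + 675 * X 1 ^ 4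

@[simp] theorem invariantsMap_X_zero : invariantsMap (X 0) = g4 := by simp [invariantsMap]

@[simp] theorem invariantsMap_X_one : invariantsMap (X 1) = h6 := by simp [invariantsMap]

@[simp] theorem invariantsMap_X_two : invariantsMap (X 2) = g6 * k6 := by simp [invariantsMap]

theorem invariantsMap_invariantsRel : invariantsMap invariantsRel = 0 := by
  simp only [invariantsRel, map_add, map_mul, map_pow, map_ofNat, invariantsMap_X_zero,
    invariantsMap_X_one, invariantsMap_X_two]
  linear_combination k6 ^ 2 * g6_sq + (4 * g4 ^ 3 + 25 * h6 ^ 2) * k6_sq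

theorem exists_eq_invariantsMap_add_mul_g6_add_mul_k6 (a : A10) :
    ∃ r₀ r₁ r₂, a = invariantsMap r₀ + invariantsMap r₁ * g6 + invariantsMap r₂ * k6 := by
  obtain ⟨p, rfl⟩ := Ideal.Quotient.mk_surjective a
  induction p using MvPolynomial.induction_on with
  | C c =>
    refine ⟨C c, 0, 0, ?_⟩
    simp only [map_zero, zero_mul, add_zero]
    exact ((Ideal.Quotient.mkₐ ℚ _).commutes c).trans (aeval_C _ c).symm
  | add p q hp hq =>
    obtain ⟨a₀, a₁, a₂, ha⟩ := hp
    obtain ⟨b₀, b₁, b₂, hb⟩ := hq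
    exact ⟨a₀ + b₀, a₁ + b₁, a₂ + b₂, by rw [map_add, ha, hb]; simp only [map_add]; ring⟩
  | mul_X p i hp =>
    obtain ⟨a₀, a₁, a₂, ha⟩ := hp
    rw [map_mul, ha]
    fin_cases i
    · change ∃ r₀ r₁ r₂, _ * g4 = _
      exact ⟨a₀ * X 0, a₁ * X 0, a₂ * X 0, by simp only [map_mul, invariantsMap_X_zero]; ring⟩
    · change ∃ r₀ r₁ r₂, _ * g6 = _
      refine ⟨a₁ * (4 * X 0 ^ 3 + 25 * X 1 ^ 2) + a₂ * X 2, a₀, 0, ?_⟩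
      simp only [map_add, map_mul, map_pow, map_ofNat, map_zero, invariantsMap_X_zero,
        invariantsMap_X_one, invariantsMap_X_two]
      linear_combination invariantsMap a₁ * g6_sq
    · change ∃ r₀ r₁ r₂, _ * h6 = _
      exact ⟨a₀ * X 1, a₁ * X 1, a₂ * X 1, by simp only [map_mul, invariantsMap_X_one]; ring⟩
    · change ∃ r₀ r₁ r₂, _ * k6 = _
      refine ⟨a₁ * X 2 - a₂ * (4 * X 0 ^ 3 + 27 * X 1 ^ 2), 0, a₀, ?_⟩
      simp only [map_add, map_sub, map_mul, map_pow, map_ofNat, map_zero, invariantsMap_X_zero,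
        invariantsMap_X_one, invariantsMap_X_two]
      linear_combination invariantsMap a₂ * k6_sq

theorem apply_invariantsMap {σ : A10 ≃ₐ[ℚ] A10} (hσg4 : σ g4 = g4) (hσg6 : σ g6 = -g6)
    (hσh6 : σ h6 = h6) (hσk6 : σ k6 = -k6) (r : MvPolynomial (Fin 3) ℚ) :
    σ (invariantsMap r) = invariantsMap r := by
  suffices h : (σ : A10 →ₐ[ℚ] A10).comp invariantsMap = invariantsMap from
    AlgHom.congr_fun h r
  refine MvPolynomial.algHom_ext fun i ↦ ?_
  fin_cases i
  · simpa using hσg4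
  · simpa using hσh6
  · simp only [Fin.reduceFinMk, Fin.isValue, AlgHom.comp_apply, AlgEquiv.coe_toAlgHom,
      invariantsMap_X_two, map_mul, hσg6, hσk6]
    exact neg_mul_neg g6 k6

theorem range_invariantsMap {σ : A10 ≃ₐ[ℚ] A10} (hσg4 : σ g4 = g4) (hσg6 : σ g6 = -g6)
    (hσh6 : σ h6 = h6) (hσk6 : σ k6 = -k6) :
    invariantsMap.range = AlgHom.equalizer (σ : A10 →ₐ[ℚ] A10) (AlgHom.id ℚ A10) := by
  have hσ := apply_invariantsMap hσg4 hσg6 hσh6 hσk6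
  ext a
  rw [AlgHom.mem_equalizer, AlgHom.mem_range]
  refine ⟨fun ⟨r, hr⟩ ↦ hr ▸ hσ r, fun ha ↦ ?_⟩
  obtain ⟨r₀, r₁, r₂, rfl⟩ := exists_eq_invariantsMap_add_mul_g6_add_mul_k6 a
  have hodd : (2 : ℚ) • (invariantsMap r₁ * g6 + invariantsMap r₂ * k6) = 0 := by
    simp only [AlgEquiv.coe_toAlgHom, AlgHom.coe_id, id_eq, map_add, map_mul, hσ, hσg6,
      hσk6] at ha
    rw [two_smul]
    linear_combination -ha
  refine ⟨r₀, ?_⟩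
  linear_combination -((smul_eq_zero.mp hodd).resolve_left two_ne_zero)

noncomputable def g6SqModel : MvPolynomial (Fin 2) ℚ := 4 * X 0 ^ 3 + 25 * X 1 ^ 2

noncomputable def k6SqModel : MvPolynomial (Fin 2) ℚ := -(4 * X 0 ^ 3 + 27 * X 1 ^ 2)

noncomputable abbrev G6Ext : Type := AdjoinRoot (Polynomial.X ^ 2 - Polynomial.C g6SqModel)

noncomputable abbrev A10Model : Type :=
  AdjoinRoot
    (Polynomial.X ^ 2 - Polynomial.C (algebraMap (MvPolynomial (Fin 2) ℚ) G6Ext k6SqModel))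

noncomputable def g4Model : A10Model := algebraMap (MvPolynomial (Fin 2) ℚ) A10Model (X 0)

noncomputable def h6Model : A10Model := algebraMap (MvPolynomial (Fin 2) ℚ) A10Model (X 1)

noncomputable def g6Model : A10Model := algebraMap G6Ext A10Model (AdjoinRoot.root _)

noncomputable def k6Model : A10Model := AdjoinRoot.root _

theorem g6Model_sq : g6Model ^ 2 = algebraMap (MvPolynomial (Fin 2) ℚ) A10Model g6SqModel := by
  rw [g6Model, ← map_pow, AdjoinRoot.root_X_sq_sub_C_sq, ← IsScalarTower.algebraMap_apply]

theorem k6Model_sq : k6Model ^ 2 = algebraMap (MvPolynomial (Fin 2) ℚ) A10Model k6SqModel := by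
  rw [k6Model, AdjoinRoot.root_X_sq_sub_C_sq, ← IsScalarTower.algebraMap_apply]

theorem linearIndependent_one_g6Model_mul_k6Model :
    LinearIndependent (MvPolynomial (Fin 2) ℚ) ![1, g6Model * k6Model] := by
  have hG6 := AdjoinRoot.linearIndependent_one_root_X_sq_sub_C g6SqModel
  have : Nontrivial G6Ext := nontrivial_of_ne _ _ (hG6.ne_zero 0)
  exact hG6.one_algebraMap_mul (AdjoinRoot.linearIndependent_one_root_X_sq_sub_C _)

theorem g6Model_sq_add_two_mul_h6Model_sq_add_k6Model_sq :
    g6Model ^ 2 + 2 * h6Model ^ 2 + k6Model ^ 2 = 0 := by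
  have h : g6SqModel + 2 * X 1 ^ 2 + k6SqModel = 0 := by rw [g6SqModel, k6SqModel]; ring
  rw [g6Model_sq, k6Model_sq, h6Model, ← map_pow,
    ← map_ofNat (algebraMap (MvPolynomial (Fin 2) ℚ) A10Model) 2, ← map_mul, ← map_add, ← map_add,
    h, map_zero]

theorem four_mul_g4Model_pow_three_add_27_mul_h6Model_sq_add_k6Model_sq :
    4 * g4Model ^ 3 + 27 * h6Model ^ 2 + k6Model ^ 2 = 0 := by
  have h : 4 * X 0 ^ 3 + 27 * X 1 ^ 2 + k6SqModel = 0 := by rw [k6SqModel]; ring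
  rw [k6Model_sq, g4Model, h6Model, ← map_pow, ← map_pow,
    ← map_ofNat (algebraMap (MvPolynomial (Fin 2) ℚ) A10Model) 4,
    ← map_ofNat (algebraMap (MvPolynomial (Fin 2) ℚ) A10Model) 27, ← map_mul, ← map_mul,
    ← map_add, ← map_add, h, map_zero]

noncomputable def toModel : A10 →ₐ[ℚ] A10Model :=
  Ideal.Quotient.liftₐ _ (aeval ![g4Model, g6Model, h6Model, k6Model]) fun p hp ↦ by
    obtain ⟨u, v, rfl⟩ := Ideal.mem_span_pair.mp hp
    simp [g6Model_sq_add_two_mul_h6Model_sq_add_k6Model_sq,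
      four_mul_g4Model_pow_three_add_27_mul_h6Model_sq_add_k6Model_sq]

theorem toModel_mk (p : MvPolynomial (Fin 4) ℚ) :
    toModel (Ideal.Quotient.mk _ p) = aeval ![g4Model, g6Model, h6Model, k6Model] p :=
  rfl

@[simp] theorem toModel_g4 : toModel g4 = g4Model := by simp [g4, toModel_mk]
@[simp] theorem toModel_g6 : toModel g6 = g6Model := by simp [g6, toModel_mk]
@[simp] theorem toModel_h6 : toModel h6 = h6Model := by simp [h6, toModel_mk]
@[simp] theorem toModel_k6 : toModel k6 = k6Model := by simp [k6, toModel_mk]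

theorem toModel_comp_invariantsMap :
    toModel.comp invariantsMap =
      ((Polynomial.aeval (g6Model * k6Model)).restrictScalars ℚ).comp
        (MvPolynomial.finSuccEquivLast ℚ 2).toAlgHom := by
  refine MvPolynomial.algHom_ext fun i ↦ ?_
  simp only [AlgHom.comp_apply, AlgEquiv.coe_toAlgHom, AlgHom.restrictScalars_apply]
  induction i using Fin.lastCases with
  | last => simp only [MvPolynomial.finSuccEquivLast_X_last, Polynomial.aeval_X]; simp
  | cast i =>
    simp only [MvPolynomial.finSuccEquivLast_X_castSucc, Polynomial.aeval_C]
    fin_cases i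
    · simp [g4Model]
    · simp [h6Model]

theorem finSuccEquivLast_invariantsRel :
    MvPolynomial.finSuccEquivLast ℚ 2 invariantsRel =
      Polynomial.X ^ 2 - Polynomial.C (g6SqModel * k6SqModel) := by
  have hx : MvPolynomial.finSuccEquivLast ℚ 2 (X 0) = Polynomial.C (X 0) :=
    MvPolynomial.finSuccEquivLast_X_castSucc ℚ 2 0
  have hy : MvPolynomial.finSuccEquivLast ℚ 2 (X 1) = Polynomial.C (X 1) :=
    MvPolynomial.finSuccEquivLast_X_castSucc ℚ 2 1
  have hz : MvPolynomial.finSuccEquivLast ℚ 2 (X 2) = Polynomial.X :=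
    MvPolynomial.finSuccEquivLast_X_last ℚ 2
  simp only [invariantsRel, g6SqModel, k6SqModel, map_add, map_mul, map_pow, map_ofNat, map_neg,
    hx, hy, hz]
  ring

theorem ker_invariantsMap : RingHom.ker invariantsMap = Ideal.span {invariantsRel} := by
  refine le_antisymm (fun t ht ↦ ?_)
    ((Ideal.span_singleton_le_iff_mem _).mpr invariantsMap_invariantsRel)
  have h : MvPolynomial.finSuccEquivLast ℚ 2 t ∈
      RingHom.ker (Polynomial.aeval (g6Model * k6Model)) := by
    have hmodel := AlgHom.congr_fun toModel_comp_invariantsMap t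
    simp only [AlgHom.comp_apply, AlgHom.restrictScalars_apply, AlgEquiv.coe_toAlgHom] at hmodel
    rw [RingHom.mem_ker] at ht ⊢
    rw [← hmodel, ht, map_zero]
  rw [Polynomial.ker_aeval_eq_span_X_sq_sub_C (by rw [mul_pow, g6Model_sq, k6Model_sq, map_mul])
    linearIndependent_one_g6Model_mul_k6Model, ← finSuccEquivLast_invariantsRel,
    Ideal.mem_span_singleton] at h
  obtain ⟨q, hq⟩ := h
  rw [Ideal.mem_span_singleton]
  exact ⟨(MvPolynomial.finSuccEquivLast ℚ 2).symm q,
    (MvPolynomial.finSuccEquivLast ℚ 2).injective (by simpa using hq)⟩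

/-- if `σ` is the ℚ-algebra involution of `A₁₀` with `σ(g₄) = g₄`,
`σ(g₆) = −g₆`, `σ(h₆) = h₆`, `σ(k₆) = −k₆`, then the map `x ↦ g₄, y ↦ h₆, z ↦ g₆k₆`
kills `z² + 16x⁶ + 208x³y² + 675y⁴` and induces
`ℚ[x,y,z]/(z² + 16x⁶ + 208x³y² + 675y⁴) ≅ A₁₀^σ`. -/
theorem stmt_15 (σ : A10 ≃ₐ[ℚ] A10)
    (hσg4 : σ g4 = g4) (hσg6 : σ g6 = -g6) (hσh6 : σ h6 = h6) (hσk6 : σ k6 = -k6) :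
    aeval (![g4, h6, g6 * k6] : Fin 3 → A10)
        ((X 2 : MvPolynomial (Fin 3) ℚ) ^ 2 + 16 * X 0 ^ 6 + 208 * X 0 ^ 3 * X 1 ^ 2 +
          675 * X 1 ^ 4) = 0 ∧
    ∃ ψ : (MvPolynomial (Fin 3) ℚ ⧸
            Ideal.span
              {(X 2 : MvPolynomial (Fin 3) ℚ) ^ 2 + 16 * X 0 ^ 6 +
                208 * X 0 ^ 3 * X 1 ^ 2 + 675 * X 1 ^ 4})
          ≃ₐ[ℚ] (AlgHom.equalizer (σ : A10 →ₐ[ℚ] A10) (AlgHom.id ℚ A10)),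
      ∀ q : MvPolynomial (Fin 3) ℚ,
        (ψ (Ideal.Quotient.mk _ q) : A10) =
          aeval (![g4, h6, g6 * k6] : Fin 3 → A10) q :=
  ⟨invariantsMap_invariantsRel,
    (Ideal.quotientEquivAlgOfEq ℚ ker_invariantsMap.symm).trans <|
      (Ideal.quotientKerEquivRange invariantsMap).trans <|
        Subalgebra.equivOfEq _ _ (range_invariantsMap hσg4 hσg6 hσh6 hσk6),
    fun _ ↦ rfl⟩
end

section
/- Let A₁₀ = ℚ[g₄,g₆,h₆,k₆]/(g₆² + 2h₆² + k₆², 4g₄³ + 27h₆² + k₆²) and let σ be the ℚ-algebra involution of A₁₀ determined by σ(g₄) = g₄, σ(g₆) = −g₆, σ(h₆) = −h₆, σ(k₆) = k₆. Then the ℚ-algebra homomorphism ℚ[x,y,z] → A₁₀ given by x ↦ g₄, y ↦ k₆, z ↦ g₆h₆ sends 32x⁶ − 92x³y² − 25y⁴ + 729z² to 0 and induces a ℚ-algebra isomorphism ℚ[x,y,z]/(32x⁶ − 92x³y² − 25y⁴ + 729z²) ≅ A₁₀^σ, where A₁₀^σ is the subalgebra of σ-fixed elements of A₁₀. -/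
open MvPolynomial

/-!
Put `P = ℚ[x, y]`, mapped to `A₁₀` by `x ↦ g₄`, `y ↦ k₆`. The relations say `h₆² = b` and
`g₆² = a` with `b = -(4x³ + y²)/27` and `a = -2b - y²` in `P`, so `A₁₀` is spanned over `P` by
`1, g₆, h₆, g₆h₆`. A σ-fixed element equals half its sum with its σ-image, hence lies in
`P + P·g₆h₆`, the image of `ℚ[x, y, z]`. The given relation is `729 (z² - ab)`, so every class
modulo it is `p + q z` with `p, q ∈ P`; it maps to `p + q g₆h₆`, which vanishes only for
`p = q = 0` since `A₁₀` maps to `P[u, v]/(u² - a, v² - b)`, free over `P` with basis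
`1, u, v, uv`.
-/

theorem AdjoinRoot.eq_zero_of_algebraMap_add_mul_root_eq_zero {R : Type*} [CommRing R]
    {c r s : R} (h : algebraMap R (AdjoinRoot (Polynomial.X ^ 2 - Polynomial.C c)) r +
      algebraMap R _ s * root (Polynomial.X ^ 2 - Polynomial.C c) = 0) :
    r = 0 ∧ s = 0 := by
  nontriviality R
  have hlin : Polynomial.C s * Polynomial.X + Polynomial.C r = 0 := by
    by_contra hne
    refine mk_ne_zero_of_degree_lt (Polynomial.monic_X_pow_sub_C c two_ne_zero) hne ?_ ?_
    · rw [Polynomial.degree_X_pow_sub_C two_pos]; exact Polynomial.degree_linear_lt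
    · rw [← h, map_add, map_mul, mk_C, mk_C, mk_X, add_comm]; rfl
  constructor
  · simpa using congrArg (Polynomial.coeff · 0) hlin
  · simpa using congrArg (Polynomial.coeff · 1) hlin

theorem Algebra.exists_add_mul_eq_of_mem_adjoin_insert_range {R P S : Type*} [CommRing R]
    [CommRing P] [CommRing S] [Algebra R P] [Algebra R S] (ι : P →ₐ[R] S) {z : S} {b : P}
    (hz : z ^ 2 = ι b) {x : S} (hx : x ∈ adjoin R (insert z (Set.range ι))) :
    ∃ p q : P, ι p + ι q * z = x := by
  let T : Subalgebra R S :=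
    { carrier := {x | ∃ p q : P, ι p + ι q * z = x}
      mul_mem' := by
        rintro _ _ ⟨p, q, rfl⟩ ⟨p', q', rfl⟩
        exact ⟨p * p' + q * q' * b, p * q' + q * p', by simp only [map_add, map_mul, ← hz]; ring⟩
      add_mem' := by
        rintro _ _ ⟨p, q, rfl⟩ ⟨p', q', rfl⟩
        exact ⟨p + p', q + q', by simp only [map_add]; ring⟩
      algebraMap_mem' := fun r => ⟨algebraMap R P r, 0, by simp⟩ }
  refine (adjoin_le (S := T) (Set.insert_subset_iff.2 ⟨?_, ?_⟩) hx : x ∈ T)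
  · exact ⟨0, 1, by simp⟩
  · rintro _ ⟨p, rfl⟩
    exact ⟨p, 0, by simp⟩

theorem MvPolynomial.mem_adjoin_range_comp_X {R σ S : Type*} [CommRing R] [CommRing S]
    [Algebra R S] {f : MvPolynomial σ R →ₐ[R] S} (hf : Function.Surjective f) (x : S) :
    x ∈ Algebra.adjoin R (Set.range (f ∘ X)) := by
  rw [Set.range_comp, Algebra.adjoin_image, adjoin_range_X, Algebra.map_top,
    (AlgHom.range_eq_top f).2 hf]
  trivial

theorem eq_zero_of_ofNat_mul_eq_zero {A : Type*} [Ring A] [Algebra ℚ A] (n : ℕ) [n.AtLeastTwo]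
    {a : A} (h : (OfNat.ofNat n : A) * a = 0) : a = 0 := by
  have : (OfNat.ofNat n : ℚ) • a = 0 := by rwa [ofNat_smul_eq_nsmul ℚ, nsmul_eq_mul]
  simpa using this

theorem AdjoinRoot.root_X_sq_sub_C_sq_s16 {R : Type*} [CommRing R] (c : R) :
    root (Polynomial.X ^ 2 - Polynomial.C c) ^ 2 = algebraMap R _ c := by
  have h := eval₂_root (Polynomial.X ^ 2 - Polynomial.C c)
  rwa [Polynomial.eval₂_sub, Polynomial.eval₂_X_pow, Polynomial.eval₂_C, sub_eq_zero] at h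

namespace A10

noncomputable def ofG4K6 : MvPolynomial (Fin 2) ℚ →ₐ[ℚ] A10 := aeval ![g4, k6]

noncomputable def h6Sq : MvPolynomial (Fin 2) ℚ := C 27⁻¹ * -(4 * X 0 ^ 3 + X 1 ^ 2)

noncomputable def g6Sq : MvPolynomial (Fin 2) ℚ := -2 * h6Sq - X 1 ^ 2

theorem relation_h6Sq : 4 * X 0 ^ 3 + 27 * h6Sq + X 1 ^ 2 = 0 := by
  have h27 : C (27⁻¹ : ℚ) * 27 = (1 : MvPolynomial (Fin 2) ℚ) := by
    rw [← map_ofNat C 27, ← C_mul]; norm_num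
  unfold h6Sq
  linear_combination (-(4 * X 0 ^ 3 + X 1 ^ 2)) * h27

theorem relation_g6 : g6 ^ 2 + 2 * h6 ^ 2 + k6 ^ 2 = 0 :=
  Ideal.Quotient.eq_zero_iff_mem.2 (Ideal.subset_span (Set.mem_insert _ _))

theorem relation_g4 : 4 * g4 ^ 3 + 27 * h6 ^ 2 + k6 ^ 2 = 0 :=
  Ideal.Quotient.eq_zero_iff_mem.2 (Ideal.subset_span (Set.mem_insert_of_mem _ rfl))

@[simp] theorem ofG4K6_X_zero : ofG4K6 (X 0) = g4 := by simp [ofG4K6]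

@[simp] theorem ofG4K6_X_one : ofG4K6 (X 1) = k6 := by simp [ofG4K6]

theorem h6_sq : h6 ^ 2 = ofG4K6 h6Sq := by
  have h := congrArg ofG4K6 relation_h6Sq
  simp only [map_add, map_mul, map_pow, map_ofNat, ofG4K6_X_zero, ofG4K6_X_one, map_zero] at h
  refine sub_eq_zero.1 (eq_zero_of_ofNat_mul_eq_zero 27 ?_)
  linear_combination relation_g4 - h

theorem g6_sq : g6 ^ 2 = ofG4K6 g6Sq := by
  simp only [g6Sq, map_sub, map_mul, map_neg, map_ofNat, map_pow, ofG4K6_X_one, ← h6_sq]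
  linear_combination relation_g6

/- `P[u, v]/(u² - a, v² - b)`, built as a tower of two quadratic extensions. -/
abbrev ModelG6 : Type := AdjoinRoot (Polynomial.X ^ 2 - Polynomial.C g6Sq)

abbrev Model : Type :=
  AdjoinRoot (Polynomial.X ^ 2 - Polynomial.C (algebraMap (MvPolynomial (Fin 2) ℚ) ModelG6 h6Sq))

noncomputable def toModel : A10 →ₐ[ℚ] Model :=
  Ideal.Quotient.liftₐ _
    (aeval ![algebraMap (MvPolynomial (Fin 2) ℚ) Model (X 0),
      algebraMap ModelG6 Model (AdjoinRoot.root _), AdjoinRoot.root _,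
      algebraMap (MvPolynomial (Fin 2) ℚ) Model (X 1)]) <| by
    have hu : algebraMap ModelG6 Model (AdjoinRoot.root _) ^ 2 =
        algebraMap (MvPolynomial (Fin 2) ℚ) Model g6Sq := by
      rw [← map_pow, AdjoinRoot.root_X_sq_sub_C_sq_s16, ← IsScalarTower.algebraMap_apply]
    have hv : AdjoinRoot.root _ ^ 2 = algebraMap (MvPolynomial (Fin 2) ℚ) Model h6Sq := by
      rw [AdjoinRoot.root_X_sq_sub_C_sq_s16, ← IsScalarTower.algebraMap_apply]
    have h₁ := congrArg (algebraMap (MvPolynomial (Fin 2) ℚ) Model)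
      (show g6Sq + 2 * h6Sq + X 1 ^ 2 = 0 by unfold g6Sq; ring)
    have h₂ := congrArg (algebraMap (MvPolynomial (Fin 2) ℚ) Model) relation_h6Sq
    simp only [map_add, map_mul, map_pow, map_ofNat, map_zero] at h₁ h₂
    refine fun a ha => (Ideal.span_le (I := RingHom.ker _)).2 ?_ ha
    rintro _ (rfl | rfl) <;> simp only [SetLike.mem_coe, RingHom.mem_ker, map_add, map_mul,
      map_pow, map_ofNat, aeval_X, Matrix.cons_val_zero, Matrix.cons_val_one, Matrix.cons_val_two,
      Matrix.cons_val_three, Matrix.head_cons, Matrix.tail_cons]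
    · linear_combination hu + 2 * hv + h₁
    · linear_combination 27 * hv + h₂

theorem toModel_mk (w : MvPolynomial (Fin 4) ℚ) : toModel (Ideal.Quotient.mk _ w) =
    aeval ![algebraMap (MvPolynomial (Fin 2) ℚ) Model (X 0),
      algebraMap ModelG6 Model (AdjoinRoot.root _), AdjoinRoot.root _,
      algebraMap (MvPolynomial (Fin 2) ℚ) Model (X 1)] w := rfl

theorem toModel_ofG4K6 (p : MvPolynomial (Fin 2) ℚ) :
    toModel (ofG4K6 p) = algebraMap (MvPolynomial (Fin 2) ℚ) Model p := by
  have : toModel.comp ofG4K6 = IsScalarTower.toAlgHom ℚ (MvPolynomial (Fin 2) ℚ) Model := by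
    ext i; fin_cases i <;> simp [ofG4K6, g4, k6, toModel_mk] <;> rfl
  exact AlgHom.congr_fun this p

theorem toModel_g6 : toModel g6 = algebraMap ModelG6 Model (AdjoinRoot.root _) := by
  simp [g6, toModel_mk]

theorem toModel_h6 : toModel h6 = AdjoinRoot.root _ :=
  (toModel_mk (X 2)).trans (aeval_X _ 2)

theorem eq_zero_of_ofG4K6_add_mul_eq_zero {p q : MvPolynomial (Fin 2) ℚ}
    (h : ofG4K6 p + ofG4K6 q * (g6 * h6) = 0) : p = 0 ∧ q = 0 := by
  have h' := congrArg toModel h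
  rw [map_add, map_mul, map_mul, toModel_ofG4K6, toModel_ofG4K6, toModel_g6, toModel_h6, map_zero,
    IsScalarTower.algebraMap_apply _ ModelG6 Model p,
    IsScalarTower.algebraMap_apply _ ModelG6 Model q, ← mul_assoc, ← map_mul] at h'
  obtain ⟨hp, hq⟩ := AdjoinRoot.eq_zero_of_algebraMap_add_mul_root_eq_zero h'
  exact ⟨(AdjoinRoot.eq_zero_of_algebraMap_add_mul_root_eq_zero (c := g6Sq) (s := 0)
      (by rw [hp, map_zero, zero_mul, add_zero])).1,
    (AdjoinRoot.eq_zero_of_algebraMap_add_mul_root_eq_zero (c := g6Sq) (r := 0)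
      (by rw [hq, map_zero, zero_add])).2⟩

theorem exists_ofG4K6_add_mul_eq (x : A10) : ∃ p₀ p₁ p₂ p₃ : MvPolynomial (Fin 2) ℚ,
    ofG4K6 p₀ + ofG4K6 p₁ * g6 + (ofG4K6 p₂ + ofG4K6 p₃ * g6) * h6 = x := by
  set T := Algebra.adjoin ℚ (insert g6 (Set.range ofG4K6))
  have hT : ∀ p, ofG4K6 p ∈ T := fun p => Algebra.subset_adjoin (Set.mem_insert_of_mem _ ⟨p, rfl⟩)
  have hx : x ∈ Algebra.adjoin ℚ (insert h6 (Set.range T.val)) := by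
    refine Algebra.adjoin_mono ?_
      (MvPolynomial.mem_adjoin_range_comp_X (Ideal.Quotient.mkₐ_surjective ℚ _) x)
    rintro _ ⟨i, rfl⟩
    fin_cases i
    · exact Or.inr ⟨⟨g4, by simpa using hT (X 0)⟩, rfl⟩
    · exact Or.inr ⟨⟨g6, Algebra.subset_adjoin (Set.mem_insert _ _)⟩, rfl⟩
    · exact Or.inl rfl
    · exact Or.inr ⟨⟨k6, by simpa using hT (X 1)⟩, rfl⟩
  have hh6 : h6 ^ 2 = T.val ⟨ofG4K6 h6Sq, hT _⟩ := h6_sq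
  obtain ⟨⟨t, ht⟩, ⟨t', ht'⟩, rfl⟩ :=
    Algebra.exists_add_mul_eq_of_mem_adjoin_insert_range T.val hh6 hx
  obtain ⟨p₀, p₁, rfl⟩ := Algebra.exists_add_mul_eq_of_mem_adjoin_insert_range ofG4K6 g6_sq ht
  obtain ⟨p₂, p₃, rfl⟩ := Algebra.exists_add_mul_eq_of_mem_adjoin_insert_range ofG4K6 g6_sq ht'
  exact ⟨p₀, p₁, p₂, p₃, rfl⟩

noncomputable def invariantRelation : MvPolynomial (Fin 3) ℚ :=
  32 * X 0 ^ 6 - 92 * X 0 ^ 3 * X 1 ^ 2 - 25 * X 1 ^ 4 + 729 * X 2 ^ 2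

theorem invariantRelation_eq :
    invariantRelation = 729 * (X 2 ^ 2 - rename Fin.castSucc (g6Sq * h6Sq)) := by
  have h := congrArg (rename Fin.castSucc) relation_h6Sq
  simp only [map_add, map_mul, map_pow, map_ofNat, rename_X, map_zero, Fin.castSucc_zero,
    Fin.castSucc_one] at h
  simp only [invariantRelation, g6Sq, map_sub, map_mul, map_neg, map_pow, map_ofNat, rename_X,
    Fin.castSucc_one]
  linear_combination (-54 * rename Fin.castSucc h6Sq + 8 * X 0 ^ 3 - 25 * X 1 ^ 2) * h

theorem exists_mk_rename_add_mul_eq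
    (x : MvPolynomial (Fin 3) ℚ ⧸ Ideal.span {invariantRelation}) :
    ∃ p q : MvPolynomial (Fin 2) ℚ, Ideal.Quotient.mk _ (rename Fin.castSucc p) +
      Ideal.Quotient.mk _ (rename Fin.castSucc q) * Ideal.Quotient.mk _ (X 2) = x := by
  set ι := (Ideal.Quotient.mkₐ ℚ (Ideal.span {invariantRelation})).comp
    (rename (R := ℚ) (Fin.castSucc : Fin 2 → Fin 3))
  have hz : Ideal.Quotient.mkₐ ℚ _ (X 2) ^ 2 = ι (g6Sq * h6Sq) := by
    have h : Ideal.Quotient.mk (Ideal.span {invariantRelation})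
        (729 * (X 2 ^ 2 - rename Fin.castSucc (g6Sq * h6Sq))) = 0 := by
      rw [← invariantRelation_eq]
      exact Ideal.Quotient.eq_zero_iff_mem.2 (Ideal.mem_span_singleton_self _)
    rw [map_mul, map_ofNat] at h
    exact sub_eq_zero.1 (by simpa [ι] using eq_zero_of_ofNat_mul_eq_zero 729 h)
  have hx : x ∈ Algebra.adjoin ℚ (insert (Ideal.Quotient.mkₐ ℚ _ (X 2)) (Set.range ι)) := by
    refine Algebra.adjoin_mono ?_
      (MvPolynomial.mem_adjoin_range_comp_X (Ideal.Quotient.mkₐ_surjective ℚ _) x)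
    rintro _ ⟨i, rfl⟩
    fin_cases i
    · exact Or.inr ⟨X 0, by simp [ι]⟩
    · exact Or.inr ⟨X 1, by simp [ι]⟩
    · exact Or.inl rfl
  exact Algebra.exists_add_mul_eq_of_mem_adjoin_insert_range ι hz hx

noncomputable def invariantsHom : MvPolynomial (Fin 3) ℚ →ₐ[ℚ] A10 := aeval ![g4, k6, g6 * h6]

theorem invariantsHom_rename (p : MvPolynomial (Fin 2) ℚ) :
    invariantsHom (rename Fin.castSucc p) = ofG4K6 p := by
  rw [invariantsHom, aeval_rename, ofG4K6]
  congr 2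
  funext i; fin_cases i <;> rfl

theorem invariantsHom_X_two : invariantsHom (X 2) = g6 * h6 := aeval_X _ 2

theorem invariantsHom_invariantRelation : invariantsHom invariantRelation = 0 := by
  rw [invariantRelation_eq, map_mul, map_sub, invariantsHom_rename, map_mul, ← g6_sq, ← h6_sq,
    map_pow, invariantsHom_X_two]
  ring

noncomputable def invariantsLift :
    (MvPolynomial (Fin 3) ℚ ⧸ Ideal.span {invariantRelation}) →ₐ[ℚ] A10 :=
  Ideal.Quotient.liftₐ _ invariantsHom fun _ ha => by
    obtain ⟨c, rfl⟩ := Ideal.mem_span_singleton'.1 ha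
    rw [map_mul, invariantsHom_invariantRelation, mul_zero]

theorem invariantsLift_mk (q : MvPolynomial (Fin 3) ℚ) :
    invariantsLift (Ideal.Quotient.mk _ q) = invariantsHom q := rfl

theorem invariantsLift_injective : Function.Injective invariantsLift := by
  refine (injective_iff_map_eq_zero _).2 fun x hx => ?_
  obtain ⟨p, q, rfl⟩ := exists_mk_rename_add_mul_eq x
  rw [map_add, map_mul, invariantsLift_mk, invariantsLift_mk, invariantsLift_mk,
    invariantsHom_rename, invariantsHom_rename] at hx
  obtain ⟨rfl, rfl⟩ := eq_zero_of_ofG4K6_add_mul_eq_zero (by simpa [invariantsHom] using hx)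
  simp

section Involution

variable (σ : A10 →ₐ[ℚ] A10) (hσ : ∀ p, σ (ofG4K6 p) = ofG4K6 p) (hσg6 : σ g6 = -g6)
  (hσh6 : σ h6 = -h6)
include hσ hσg6 hσh6

theorem equalizer_eq_range_invariantsHom :
    AlgHom.equalizer σ (AlgHom.id ℚ A10) = invariantsHom.range := by
  ext x
  rw [AlgHom.mem_equalizer, AlgHom.id_apply, AlgHom.mem_range]
  constructor
  · intro hx
    obtain ⟨p₀, p₁, p₂, p₃, rfl⟩ := exists_ofG4K6_add_mul_eq x
    refine ⟨rename Fin.castSucc p₀ + rename Fin.castSucc p₃ * X 2, ?_⟩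
    rw [map_add, map_mul, invariantsHom_rename, invariantsHom_rename]
    refine (sub_eq_zero.1 (eq_zero_of_ofNat_mul_eq_zero 2 ?_)).symm
    simp only [map_add, map_mul, hσ, hσg6, hσh6] at hx
    rw [invariantsHom_X_two]
    linear_combination -hx
  · rintro ⟨q, rfl⟩
    have : σ.comp invariantsHom = invariantsHom := by
      ext i; fin_cases i
      · simpa [invariantsHom] using hσ (X 0)
      · simpa [invariantsHom] using hσ (X 1)
      · show σ (invariantsHom (X 2)) = invariantsHom (X 2)
        rw [invariantsHom_X_two, map_mul, hσg6, hσh6, neg_mul_neg g6 h6]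
    exact AlgHom.congr_fun this q

end Involution

end A10

/-- if `σ` is the ℚ-algebra involution of `A₁₀` with `σ(g₄) = g₄`,
`σ(g₆) = −g₆`, `σ(h₆) = −h₆`, `σ(k₆) = k₆`, then the map `x ↦ g₄, y ↦ k₆, z ↦ g₆h₆`
kills `32x⁶ − 92x³y² − 25y⁴ + 729z²` and induces
`ℚ[x,y,z]/(32x⁶ − 92x³y² − 25y⁴ + 729z²) ≅ A₁₀^σ`. -/
theorem stmt_16 (σ : A10 ≃ₐ[ℚ] A10)
    (hσg4 : σ g4 = g4) (hσg6 : σ g6 = -g6) (hσh6 : σ h6 = -h6) (hσk6 : σ k6 = k6) :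
    aeval (![g4, k6, g6 * h6] : Fin 3 → A10)
        (32 * (X 0 : MvPolynomial (Fin 3) ℚ) ^ 6 - 92 * X 0 ^ 3 * X 1 ^ 2 -
          25 * X 1 ^ 4 + 729 * X 2 ^ 2) = 0 ∧
    ∃ ψ : (MvPolynomial (Fin 3) ℚ ⧸
            Ideal.span
              {32 * (X 0 : MvPolynomial (Fin 3) ℚ) ^ 6 - 92 * X 0 ^ 3 * X 1 ^ 2 -
                25 * X 1 ^ 4 + 729 * X 2 ^ 2})
          ≃ₐ[ℚ] (AlgHom.equalizer (σ : A10 →ₐ[ℚ] A10) (AlgHom.id ℚ A10)),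
      ∀ q : MvPolynomial (Fin 3) ℚ,
        (ψ (Ideal.Quotient.mk _ q) : A10) =
          aeval (![g4, k6, g6 * h6] : Fin 3 → A10) q := by
  have hσ : ∀ p, σ (A10.ofG4K6 p) = A10.ofG4K6 p := by
    have : (σ : A10 →ₐ[ℚ] A10).comp A10.ofG4K6 = A10.ofG4K6 := by
      ext i; fin_cases i <;> simp [hσg4, hσk6]
    exact AlgHom.congr_fun this
  have hrange := A10.equalizer_eq_range_invariantsHom σ hσ hσg6 hσh6
  let ψ := A10.invariantsLift.codRestrict (AlgHom.equalizer (σ : A10 →ₐ[ℚ] A10) (AlgHom.id ℚ A10))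
    fun x => by
      obtain ⟨q, rfl⟩ := Ideal.Quotient.mk_surjective x
      rw [hrange]
      exact ⟨q, rfl⟩
  have hψ : Function.Bijective ψ := by
    refine ⟨fun x y h => A10.invariantsLift_injective (congrArg Subtype.val h), ?_⟩
    rintro ⟨x, hx⟩
    obtain ⟨q, rfl⟩ : x ∈ A10.invariantsHom.range := hrange ▸ hx
    exact ⟨Ideal.Quotient.mk _ q, rfl⟩
  exact ⟨A10.invariantsHom_invariantRelation, AlgEquiv.ofBijective ψ hψ, fun q => rfl⟩
end
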